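/- Let V be a normed space, M ⊆ V, and V_{n-1} a subset of V. Suppose the residual R(v,y) = ‖A(y)v − f(y)‖ satisfies r·‖u(y) − v‖ ≤ R(v,y) ≤ R·‖u(y) − v‖ for all v and y, where u(y) solves A(y)u(y) = f(y). If y_n satisfies inf_{v ∈ V_{n-1}} R(v, y_n) ≥ γ · sup_{y} inf_{v ∈ V_{n-1}} R(v, y) for some γ ∈ (0,1], then u_n = u(y_n) satisfies the weak greedy property inf_{v ∈ V_{n-1}} ‖u_n − v‖ ≥ (γ r / R) · sup_{y} inf_{v ∈ V_{n-1}} ‖u(y) − v‖. -/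

import Mathlib

/-!
Write `d y = inf_{v ∈ V_{n-1}} ‖u(y) - v‖` and `ρ y = inf_{v ∈ V_{n-1}} R(v, y)`. Taking infima in the
residual equivalence gives `r d ≤ ρ ≤ R d` pointwise. Hence
`γ r sup d ≤ γ sup ρ ≤ ρ(y_n) ≤ R d(y_n)`: a weak greedy choice for `ρ` with parameter `γ` is a weak
greedy choice for `d` with parameter `γ r / R`.
-/

open Set

def IsWeakGreedy {Y : Type*} (γ : ℝ) (d : Y → ℝ) (y₀ : Y) : Prop :=
  γ * ⨆ y, d y ≤ d y₀

section Comparison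

variable {ι : Type*} {c : ℝ} {f g : ι → ℝ}

theorem mul_iInf_le_iInf_of_nonneg (hc : 0 ≤ c) (hf : ∀ i, 0 ≤ f i) (h : ∀ i, c * f i ≤ g i) :
    c * ⨅ i, f i ≤ ⨅ i, g i := by
  rw [Real.mul_iInf_of_nonneg hc]
  exact ciInf_mono ⟨0, by rintro _ ⟨i, rfl⟩; exact mul_nonneg hc (hf i)⟩ h

theorem iInf_le_mul_iInf_of_nonneg (hc : 0 ≤ c) (hg : BddBelow (range g))
    (h : ∀ i, g i ≤ c * f i) : ⨅ i, g i ≤ c * ⨅ i, f i := by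
  rw [Real.mul_iInf_of_nonneg hc]
  exact ciInf_mono hg h

theorem mul_iSup_le_iSup_of_nonneg (hc : 0 ≤ c) (hg : BddAbove (range g))
    (h : ∀ i, c * f i ≤ g i) : c * ⨆ i, f i ≤ ⨆ i, g i := by
  rw [Real.mul_iSup_of_nonneg hc]
  exact ciSup_mono hg h

end Comparison

theorem IsWeakGreedy.of_comparable {Y : Type*} {ρ d : Y → ℝ} {r R γ : ℝ} {y₀ : Y}
    (hρ : IsWeakGreedy γ ρ y₀) (hr : 0 ≤ r) (hR : 0 < R) (hγ : 0 ≤ γ)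
    (hbdd : BddAbove (range ρ)) (hlow : ∀ y, r * d y ≤ ρ y) (hup : ρ y₀ ≤ R * d y₀) :
    IsWeakGreedy (γ * r / R) d y₀ := by
  unfold IsWeakGreedy at hρ ⊢
  rw [div_mul_eq_mul_div, div_le_iff₀ hR]
  calc γ * r * ⨆ y, d y = γ * (r * ⨆ y, d y) := mul_assoc _ _ _
    _ ≤ γ * ⨆ y, ρ y := by gcongr; exact mul_iSup_le_iSup_of_nonneg hr hbdd hlow
    _ ≤ R * d y₀ := hρ.trans hup
    _ = d y₀ * R := mul_comm _ _

theorem weak_greedy_from_residual_general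
    {V : Type*} [NormedAddCommGroup V] {Y : Type*}
    (u : Y → V) (Res : V → Y → ℝ)
    (Vn : Set V)
    (r R : ℝ) (hr : 0 < r) (hrR : r ≤ R)
    (hequiv : ∀ (v : V) (y : Y),
      r * ‖u y - v‖ ≤ Res v y ∧ Res v y ≤ R * ‖u y - v‖)
    (hbd₁ : BddAbove (Set.range fun y : Y => ⨅ v : Vn, Res v y))
    (γ : ℝ) (hγ₀ : 0 < γ)
    (yn : Y)
    (hyn : (⨅ v : Vn, Res v yn) ≥ γ * ⨆ y : Y, ⨅ v : Vn, Res v y) :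
    (⨅ v : Vn, ‖u yn - (v : V)‖) ≥
      (γ * r / R) * ⨆ y : Y, ⨅ v : Vn, ‖u y - (v : V)‖ := by
  have hR : 0 < R := hr.trans_le hrR
  have hRes_nonneg (v : V) (y : Y) : 0 ≤ Res v y :=
    (mul_nonneg hr.le (norm_nonneg _)).trans (hequiv v y).1
  have hlow (y : Y) : r * ⨅ v : Vn, ‖u y - (v : V)‖ ≤ ⨅ v : Vn, Res v y :=
    mul_iInf_le_iInf_of_nonneg hr.le (fun _ ↦ norm_nonneg _) fun v ↦ (hequiv v y).1
  have hup : ⨅ v : Vn, Res v yn ≤ R * ⨅ v : Vn, ‖u yn - (v : V)‖ :=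
    iInf_le_mul_iInf_of_nonneg hR.le ⟨0, by rintro _ ⟨v, rfl⟩; exact hRes_nonneg v yn⟩
      fun v ↦ (hequiv v yn).2
  exact IsWeakGreedy.of_comparable hyn hr.le hR hγ₀.le hbd₁ hlow hup

theorem weak_greedy_from_residual
    {V : Type*} [NormedAddCommGroup V] {Y : Type*} [Nonempty Y]
    (u : Y → V) (Res : V → Y → ℝ)
    (Vn : Set V) (hVn : Vn.Nonempty)
    (r R : ℝ) (hr : 0 < r) (hrR : r ≤ R)
    (hequiv : ∀ (v : V) (y : Y),
      r * ‖u y - v‖ ≤ Res v y ∧ Res v y ≤ R * ‖u y - v‖)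
    (hbd₁ : BddAbove (Set.range fun y : Y => ⨅ v : Vn, Res v y))
    (hbd₂ : BddAbove (Set.range fun y : Y => ⨅ v : Vn, ‖u y - (v : V)‖))
    (γ : ℝ) (hγ₀ : 0 < γ) (hγ₁ : γ ≤ 1)
    (yn : Y)
    (hyn : (⨅ v : Vn, Res v yn) ≥ γ * ⨆ y : Y, ⨅ v : Vn, Res v y) :
    (⨅ v : Vn, ‖u yn - (v : V)‖) ≥
      (γ * r / R) * ⨆ y : Y, ⨅ v : Vn, ‖u y - (v : V)‖ :=
  weak_greedy_from_residual_general u Res Vn r R hr hrR hequiv hbd₁ γ hγ₀ yn hyn
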